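/- arXiv:1307.6029 — 7 statements merged into one kernel-verified Lean document; each statement's English description precedes it below -/
import Mathlib

section
/- Let n ≥ 2. Define the odd-even transposition process on positions 1..n: at odd-numbered rounds simultaneously swap the contents of positions (i, i+1) for all odd i < n, and at even-numbered rounds swap positions (i, i+1) for all even i < n. After n rounds, the agent that started at position i is at position n+1−i. -/
/-- One round of the odd-even transposition process on positions `1..n`:
round `r` swaps positions `(i, i+1)` for all `i < n` with `i` of the same parity as `r`. -/
def oeStep (n r p : ℕ) : ℕ :=
  if r % 2 = 1 then
    if p % 2 = 1 ∧ p < n then p + 1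
    else if p % 2 = 0 then p - 1
    else p
  else
    if p % 2 = 0 ∧ p < n then p + 1
    else if p % 2 = 1 ∧ 1 < p then p - 1
    else p

/-- `oePos n i t` is the position after `t` rounds of the agent that started at position `i`. -/
def oePos (n i : ℕ) : ℕ → ℕ
  | 0 => i
  | t + 1 => oeStep n (t + 1) (oePos n i t)

/-!
An agent at position `p` before round `r` is the left end of a swapped pair when `p ≡ r`
and the right end otherwise. Both parities flip every round, so an agent keeps moving in one
direction until it reaches a wall, waits there for one round, and then moves in the other
direction. An agent starting at an odd `i` walks right to `n` in `n - i` rounds, waits one round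
and walks left for the remaining `i - 1` rounds; an agent starting at an even `i` walks left to
`1`, waits, and walks right for `n - i` rounds. Either way it ends at `n + 1 - i`.
-/

section Step

variable {n r p : ℕ}

lemma oeStep_eq_succ (h : p % 2 = r % 2) (hp : p < n) : oeStep n r p = p + 1 := by
  unfold oeStep
  split_ifs <;> omega

lemma oeStep_eq_self_of_le (h : p % 2 = r % 2) (hp : n ≤ p) : oeStep n r p = p := by
  unfold oeStep
  split_ifs <;> omega

lemma oeStep_eq_pred (h : p % 2 ≠ r % 2) (hp : 1 < p) : oeStep n r p = p - 1 := by
  unfold oeStep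
  split_ifs <;> omega

lemma oeStep_one (hr : r % 2 = 0) : oeStep n r 1 = 1 := by
  simp [oeStep, hr]

end Step

section Trajectory

variable {n i t p : ℕ}

lemma oePos_add_of_moving_right (h : oePos n i t = p) (hpar : p % 2 = (t + 1) % 2) :
    ∀ s, p + s ≤ n → oePos n i (t + s) = p + s
  | 0, _ => h
  | s + 1, hs => by
    rw [← add_assoc, oePos, oePos_add_of_moving_right h hpar s (by omega),
      oeStep_eq_succ (by omega) (by omega), add_assoc]

lemma oePos_add_of_moving_left (h : oePos n i t = p) (hpar : p % 2 ≠ (t + 1) % 2) :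
    ∀ s, s < p → oePos n i (t + s) = p - s
  | 0, _ => h
  | s + 1, hs => by
    rw [← add_assoc, oePos, oePos_add_of_moving_left h hpar s (by omega),
      oeStep_eq_pred (by omega) (by omega)]
    omega

lemma oePos_succ_of_right_wall (h : oePos n i t = n) (hpar : n % 2 = (t + 1) % 2) :
    oePos n i (t + 1) = n := by
  rw [oePos, h, oeStep_eq_self_of_le hpar le_rfl]

lemma oePos_succ_of_left_wall (h : oePos n i t = 1) (hpar : (t + 1) % 2 = 0) :
    oePos n i (t + 1) = 1 := by
  rw [oePos, h, oeStep_one hpar]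

end Trajectory

theorem oe_reversal_general (n : ℕ) (i : ℕ) (hi1 : 1 ≤ i) (hin : i ≤ n) :
    oePos n i n = n + 1 - i := by
  have start : oePos n i 0 = i := rfl
  rcases Nat.even_or_odd i with ⟨k, hk⟩ | ⟨k, hk⟩
  · have at_wall : oePos n i (i - 1) = 1 := by
      simpa [show i - (i - 1) = 1 by omega] using
        oePos_add_of_moving_left start (by omega) (i - 1) (by omega)
    have waited := oePos_succ_of_left_wall at_wall (by omega)
    have back := oePos_add_of_moving_right waited (by omega) (n - i) (by omega)
    rwa [show i - 1 + 1 + (n - i) = n by omega, show 1 + (n - i) = n + 1 - i by omega] at back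
  · have at_wall : oePos n i (n - i) = n := by
      simpa [show i + (n - i) = n by omega] using
        oePos_add_of_moving_right start (by omega) (n - i) (by omega)
    have waited := oePos_succ_of_right_wall at_wall (by omega)
    have back := oePos_add_of_moving_left waited (by omega) (i - 1) (by omega)
    rwa [show n - i + 1 + (i - 1) = n by omega, show n - (i - 1) = n + 1 - i by omega] at back

/-- After `n` rounds of the odd-even transposition process, the agent that
started at position `i` is at position `n + 1 - i`. -/
theorem oe_reversal (n : ℕ) (hn : 2 ≤ n) (i : ℕ) (hi1 : 1 ≤ i) (hin : i ≤ n) :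
    oePos n i n = n + 1 - i :=
  oe_reversal_general n i hi1 hin
end

section
/- In the odd-even transposition process on n positions, an agent starting at an odd-indexed position moves up by one position each round until reaching position n, stays there exactly one round, then moves down by one each round; symmetrically, an agent starting at an even position moves down by one each round until reaching position 1, stays one round, then moves up. -/
lemma oeStep_of_mod_eq_of_lt {n r p : ℕ} (hpar : p % 2 = r % 2) (hp : p < n) :
    oeStep n r p = p + 1 := by
  unfold oeStep; split_ifs <;> omega

lemma oeStep_of_mod_eq_of_le {n r p : ℕ} (hpar : p % 2 = r % 2) (hp : n ≤ p) :
    oeStep n r p = p := by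
  unfold oeStep; split_ifs <;> omega

lemma oeStep_of_mod_ne {n r p : ℕ} (hpar : p % 2 ≠ r % 2) (hp : 2 ≤ p) :
    oeStep n r p = p - 1 := by
  unfold oeStep; split_ifs <;> omega

lemma oeStep_one_of_mod_two_eq_zero {n r : ℕ} (hr : r % 2 = 0) : oeStep n r 1 = 1 := by
  simp [oeStep, hr]

lemma oePos_succ (n i t : ℕ) : oePos n i (t + 1) = oeStep n (t + 1) (oePos n i t) := rfl

lemma oePos_add_of_rising {n i s p : ℕ} (hs : oePos n i s = p) (hpar : p % 2 = (s + 1) % 2)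
    {k : ℕ} (hk : p + k ≤ n) : oePos n i (s + k) = p + k := by
  induction k with
  | zero => exact hs
  | succ k ih =>
    rw [← add_assoc, oePos_succ, ih (by omega), oeStep_of_mod_eq_of_lt (by omega) (by omega)]
    rfl

lemma oePos_sub_of_falling {n i s p : ℕ} (hs : oePos n i s = p) (hpar : p % 2 ≠ (s + 1) % 2)
    {k : ℕ} (hk : k < p) : oePos n i (s + k) = p - k := by
  induction k with
  | zero => exact hs
  | succ k ih =>
    rw [← add_assoc, oePos_succ, ih (by omega), oeStep_of_mod_ne (by omega) (by omega)]
    omega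

theorem oe_trajectory_general (n i : ℕ) (hi1 : 1 ≤ i) (hin : i ≤ n) :
    (i % 2 = 1 →
      (∀ t ≤ n - i, oePos n i t = i + t) ∧
      oePos n i (n - i + 1) = n ∧
      (∀ t, n - i + 1 ≤ t → t ≤ 2 * n - i → oePos n i t = 2 * n - i + 1 - t)) ∧
    (i % 2 = 0 →
      (∀ t ≤ i - 1, oePos n i t = i - t) ∧
      oePos n i i = 1 ∧
      (∀ t, i ≤ t → t ≤ n + i - 1 → oePos n i t = t - i + 1)) := by
  constructor
  · intro hodd
    have rise (t : ℕ) (ht : t ≤ n - i) : oePos n i t = i + t := by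
      simpa using
        oePos_add_of_rising (n := n) (s := 0) (p := i) rfl (by omega) (by omega : i + t ≤ n)
    have top : oePos n i (n - i + 1) = n := by
      rw [oePos_succ, rise _ le_rfl, oeStep_of_mod_eq_of_le (by omega) (by omega)]
      omega
    refine ⟨rise, top, fun t h1 h2 => ?_⟩
    have fall := oePos_sub_of_falling top (by omega) (by omega : t - (n - i + 1) < n)
    rw [Nat.add_sub_cancel' h1] at fall
    omega
  · intro heven
    have fall (t : ℕ) (ht : t ≤ i - 1) : oePos n i t = i - t := by
      simpa using
        oePos_sub_of_falling (n := n) (s := 0) (p := i) rfl (by omega) (by omega : t < i)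
    have bottom : oePos n i i = 1 := by
      obtain ⟨k, rfl⟩ : ∃ k, i = k + 1 := ⟨i - 1, by omega⟩
      rw [oePos_succ, fall k (by omega), Nat.add_sub_cancel_left,
        oeStep_one_of_mod_two_eq_zero heven]
    refine ⟨fall, bottom, fun t h1 h2 => ?_⟩
    have rise := oePos_add_of_rising bottom (by omega) (by omega : 1 + (t - i) ≤ n)
    rw [Nat.add_sub_cancel' h1] at rise
    omega

/-- Trajectory description: an agent starting at an odd position `i` moves up one position
each round until reaching position `n`, stays there exactly one round, then moves down one
position each round (until reaching position `1`); an agent starting at an even position `i`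
moves down one each round until reaching position `1`, stays one round, then moves up one
each round (until reaching position `n`). -/
theorem oe_trajectory (n i : ℕ) (hn : 2 ≤ n) (hi1 : 1 ≤ i) (hin : i ≤ n) :
    (i % 2 = 1 →
      (∀ t ≤ n - i, oePos n i t = i + t) ∧
      oePos n i (n - i + 1) = n ∧
      (∀ t, n - i + 1 ≤ t → t ≤ 2 * n - i → oePos n i t = 2 * n - i + 1 - t)) ∧
    (i % 2 = 0 →
      (∀ t ≤ i - 1, oePos n i t = i - t) ∧
      oePos n i i = 1 ∧
      (∀ t, i ≤ t → t ≤ n + i - 1 → oePos n i t = t - i + 1)) :=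
  oe_trajectory_general n i hi1 hin
end

section
/- In the odd-even transposition process on n positions, for every pair of agents starting at positions i < j with j − i ≥ 2, there is some round t ≤ n−2 at the end of which the two agents occupy adjacent positions (differing by 1). -/
theorem oeStep_eq {n r p : ℕ} (hp1 : 1 ≤ p) (hpn : p ≤ n) :
    oeStep n r p = if p % 2 = r % 2 then min (p + 1) n else max (p - 1) 1 := by
  unfold oeStep
  split_ifs <;> omega

theorem oePos_of_odd {n i t : ℕ} (hi : i % 2 = 1) (hin : i ≤ n) (ht : i + t ≤ 2 * n) :
    oePos n i t = min (i + t) (2 * n + 1 - i - t) := by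
  induction t with
  | zero => simp only [oePos]; omega
  | succ t ih =>
    rw [oePos, ih (by omega), oeStep_eq (by omega) (by omega)]
    split_ifs <;> omega

theorem oePos_of_even {n i t : ℕ} (hi : i % 2 = 0) (hi0 : 0 < i) (hin : i ≤ n)
    (ht : t < n + i) :
    oePos n i t = max (i - t) (t + 1 - i) := by
  induction t with
  | zero => simp only [oePos]; omega
  | succ t ih =>
    rw [oePos, ih (by omega), oeStep_eq (by omega) (by omega)]
    split_ifs <;> omega

theorem oe_meet_general (n i j : ℕ) (hi1 : 1 ≤ i) (hij : i + 2 ≤ j) (hjn : j ≤ n) :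
    ∃ t ≤ n - 2, Nat.dist (oePos n i t) (oePos n j t) = 1 := by
  rcases Nat.mod_two_eq_zero_or_one i with hi | hi <;>
    rcases Nat.mod_two_eq_zero_or_one j with hj | hj
  · -- `i` bounces off `1` and catches up with `j`, which still walks left
    refine ⟨(i + j) / 2 - 1, by omega, ?_⟩
    rw [oePos_of_even hi hi1 (by omega) (by omega), oePos_of_even hj (by omega) hjn (by omega),
      Nat.dist]
    omega
  · -- both have bounced off their walls and walk towards each other
    refine ⟨n - (j - i + 1) / 2, by omega, ?_⟩
    rw [oePos_of_even hi hi1 (by omega) (by omega), oePos_of_odd hj hjn (by omega), Nat.dist]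
    omega
  · -- they walk towards each other from the start
    refine ⟨(j - i - 1) / 2, by omega, ?_⟩
    rw [oePos_of_odd hi (by omega) (by omega), oePos_of_even hj (by omega) hjn (by omega),
      Nat.dist]
    omega
  · -- `j` bounces off `n` and meets `i`, which still walks right
    refine ⟨n - (i + j) / 2, by omega, ?_⟩
    rw [oePos_of_odd hi (by omega) (by omega), oePos_of_odd hj hjn (by omega), Nat.dist]
    omega

/-- In the odd-even transposition process on `n` positions, every pair of agents starting
at positions `i < j` with `j - i ≥ 2` occupy adjacent positions at the end of some round
`t ≤ n - 2`. -/
theorem oe_meet (n i j : ℕ) (hn : 2 ≤ n) (hi1 : 1 ≤ i) (hij : i + 2 ≤ j) (hjn : j ≤ n) :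
    ∃ t ≤ n - 2, Nat.dist (oePos n i t) (oePos n j t) = 1 :=
  oe_meet_general n i j hi1 hij hjn
end

section
/- The acquaintance time of the n-vertex path satisfies AC(P_n) ≤ n − 2 for all n ≥ 3. -/
/-- One round of the acquaintance process: the placement (a bijection from agents to
vertices) `x` is updated to `y` by letting agents swap along the edges of a matching of
`G`, i.e. `y = σ ∘ x` for an involution `σ` of the vertices moving each vertex to itself
or to a neighbor. -/
def IsMatchingStep {V : Type*} (G : SimpleGraph V) (x y : Equiv.Perm V) : Prop :=
  ∃ σ : Equiv.Perm V, (∀ v, σ (σ v) = v) ∧ (∀ v, σ v = v ∨ G.Adj v (σ v)) ∧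
    ∀ a, y a = σ (x a)

/-- An `m`-round strategy for acquaintance in `G`: starting from the identity placement,
each round is a matching swap, and every pair of distinct agents is at some time (≤ m)
located on a pair of adjacent vertices. -/
def IsAcqStrategy {V : Type*} (G : SimpleGraph V) (m : ℕ) (f : ℕ → Equiv.Perm V) : Prop :=
  f 0 = Equiv.refl V ∧ (∀ t < m, IsMatchingStep G (f t) (f (t + 1))) ∧
    ∀ a b : V, a ≠ b → ∃ t ≤ m, G.Adj (f t a) (f t b)

/-- The acquaintance time of `G`: the least number of rounds of a strategy for
acquaintance in `G`. -/
noncomputable def AC {V : Type*} (G : SimpleGraph V) : ℕ :=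
  sInf {m | ∃ f : ℕ → Equiv.Perm V, IsAcqStrategy G m f}

/-- The barbell graph on `n` vertices: a clique on the first `⌈n/2⌉` vertices and a clique
on the remaining `⌊n/2⌋` vertices, joined by a single bridge edge. -/
def barbell (n : ℕ) : SimpleGraph (Fin n) :=
  SimpleGraph.fromRel (fun i j =>
    ((i : ℕ) < (n + 1) / 2 ∧ (j : ℕ) < (n + 1) / 2) ∨
    ((n + 1) / 2 ≤ (i : ℕ) ∧ (n + 1) / 2 ≤ (j : ℕ)) ∨
    ((i : ℕ) = (n + 1) / 2 - 1 ∧ (j : ℕ) = (n + 1) / 2))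

namespace ACPath

/-- Fold `x mod 2n` into `[0, n)` by reflection. -/
def fold (n : ℕ) (x : ℤ) : ℤ :=
  if x % (2 * (n : ℤ)) < (n : ℤ) then x % (2 * (n : ℤ))
  else 2 * (n : ℤ) - 1 - x % (2 * (n : ℤ))

lemma emod_bounds {n : ℕ} (hn : 0 < n) (x : ℤ) :
    0 ≤ x % (2 * (n : ℤ)) ∧ x % (2 * (n : ℤ)) < 2 * (n : ℤ) := by
  have h2 : (0:ℤ) < 2 * (n:ℤ) := by positivity
  exact ⟨Int.emod_nonneg x (by omega), Int.emod_lt_of_pos x h2⟩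

lemma fold_bounds {n : ℕ} (hn : 0 < n) (x : ℤ) : 0 ≤ fold n x ∧ fold n x < (n:ℤ) := by
  obtain ⟨h1, h3⟩ := emod_bounds hn x
  unfold fold; split <;> omega

lemma fold_congr {n : ℕ} {x y : ℤ} (h : x % (2 * (n:ℤ)) = y % (2 * (n:ℤ))) :
    fold n x = fold n y := by
  unfold fold; rw [h]

lemma self_sub_emod {n : ℕ} (x : ℤ) :
    ∃ k : ℤ, x = 2 * (n:ℤ) * k + x % (2 * (n:ℤ)) :=
  ⟨x / (2 * (n:ℤ)), by rw [Int.mul_ediv_add_emod x (2*(n:ℤ))]⟩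

lemma fold_eq_cases {n : ℕ} (hn : 0 < n) {x y : ℤ} (h : fold n x = fold n y) :
    (2 * (n:ℤ)) ∣ (x - y) ∨ (2 * (n:ℤ)) ∣ (x + y + 1) := by
  obtain ⟨kx, hkx⟩ := self_sub_emod (n := n) x
  obtain ⟨ky, hky⟩ := self_sub_emod (n := n) y
  obtain ⟨hx1, hx2⟩ := emod_bounds hn x
  obtain ⟨hy1, hy2⟩ := emod_bounds hn y
  unfold fold at h
  split_ifs at h with h1 h2 h2
  · left; exact ⟨kx - ky, by linarith⟩
  · right; exact ⟨kx + ky + 1, by linarith⟩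
  · right; exact ⟨kx + ky + 1, by linarith⟩
  · left; exact ⟨kx - ky, by linarith⟩

/-- The virtual starting residue of agent `i`. -/
def vres {n : ℕ} (i : Fin n) : ℤ :=
  if (i : ℕ) % 2 = 0 then ((i : ℕ) : ℤ) else -((i : ℕ) : ℤ) - 1

lemma vres_even {n : ℕ} (i : Fin n) : ∃ k : ℤ, vres i = 2 * k := by
  unfold vres; split
  · refine ⟨((i:ℕ)/2 : ℕ), ?_⟩
    have := Nat.div_add_mod (i:ℕ) 2
    push_cast
    omega
  · refine ⟨-(((i:ℕ)/2 : ℕ)) - 1, ?_⟩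
    have := Nat.div_add_mod (i:ℕ) 2
    push_cast
    omega

lemma fold_vres {n : ℕ} (i : Fin n) : fold n (vres i) = ((i:ℕ) : ℤ) := by
  have hn : 0 < n := i.pos
  have hi : (i:ℕ) < n := i.isLt
  unfold vres
  split
  · have h1 : ((i:ℕ):ℤ) % (2*(n:ℤ)) = ((i:ℕ):ℤ) :=
      Int.emod_eq_of_lt (by positivity) (by push_cast; omega)
    unfold fold; rw [h1]; rw [if_pos (by push_cast; omega : ((i:ℕ):ℤ) < (n:ℤ))]
  · have h1 : (-((i:ℕ):ℤ) - 1) % (2*(n:ℤ)) = 2*(n:ℤ) - 1 - ((i:ℕ):ℤ) := by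
      have h2 : -((i:ℕ):ℤ) - 1 = (2*(n:ℤ) - 1 - ((i:ℕ):ℤ)) + 2*(n:ℤ) * (-1) := by ring
      rw [h2, Int.add_mul_emod_self_left]
      exact Int.emod_eq_of_lt (by push_cast; omega) (by push_cast; omega)
    unfold fold; rw [h1]
    rw [if_neg (by push_cast; omega)]
    push_cast; ring

/-- The position of agent `i` at time `t`. -/
def pos {n : ℕ} (t : ℕ) (i : Fin n) : Fin n :=
  ⟨(fold n (vres i + t)).toNat, by
    obtain ⟨h1, h2⟩ := fold_bounds i.pos (vres i + t); omega⟩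

lemma pos_coe {n : ℕ} (t : ℕ) (i : Fin n) :
    ((pos t i : ℕ) : ℤ) = fold n (vres i + t) := by
  obtain ⟨h1, h2⟩ := fold_bounds i.pos (vres i + t)
  simp only [pos]
  omega

lemma pos_inj {n : ℕ} (t : ℕ) : Function.Injective (pos (n := n) t) := by
  intro i j h
  have hn : 0 < n := i.pos
  have hc : fold n (vres i + t) = fold n (vres j + t) := by
    rw [← pos_coe, ← pos_coe, h]
  rcases fold_eq_cases hn hc with hd | hd
  · obtain ⟨k, hk⟩ := hd
    have h1 : vres i % (2*(n:ℤ)) = vres j % (2*(n:ℤ)) := by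
      have h2 : vres i = vres j + 2*(n:ℤ)*k := by linarith
      rw [h2, Int.add_mul_emod_self_left]
    have h3 := fold_congr (n := n) h1
    rw [fold_vres, fold_vres] at h3
    ext
    omega
  · exfalso
    obtain ⟨k, hk⟩ := hd
    obtain ⟨a, ha⟩ := vres_even i
    obtain ⟨b, hb⟩ := vres_even j
    have hnk : (2*(n:ℤ))*k = 2*((n:ℤ)*k) := by ring
    rw [hnk] at hk
    set m := (n:ℤ)*k
    omega

/-- The placement permutation at time `t`. -/
noncomputable def fperm (n : ℕ) (t : ℕ) : Equiv.Perm (Fin n) :=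
  Equiv.ofBijective (pos t) (Finite.injective_iff_bijective.mp (pos_inj t))

lemma fperm_apply (n t : ℕ) (i : Fin n) : fperm n t i = pos t i := rfl

lemma fperm_zero (n : ℕ) : fperm n 0 = Equiv.refl (Fin n) := by
  refine Equiv.ext fun i => ?_
  have h := pos_coe (n := n) 0 i
  rw [Nat.cast_zero, add_zero, fold_vres] at h
  rw [fperm_apply, Equiv.refl_apply]
  exact Fin.ext (by omega)

/-- The matching swap at round `t`: vertices `v ≡ t (mod 2)` swap with `v+1`. -/
def sig (n t : ℕ) (v : Fin n) : Fin n :=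
  if (v : ℕ) % 2 = t % 2 then
    (if h : (v : ℕ) + 1 < n then ⟨(v : ℕ) + 1, h⟩ else v)
  else
    (if (v : ℕ) = 0 then v else ⟨(v : ℕ) - 1, by omega⟩)

lemma sig_coe {n : ℕ} (t : ℕ) (v : Fin n) : ((sig n t v : ℕ)) =
    if (v : ℕ) % 2 = t % 2 then (if (v : ℕ) + 1 < n then (v : ℕ) + 1 else (v : ℕ))
    else (if (v : ℕ) = 0 then 0 else (v : ℕ) - 1) := by
  unfold sig
  split_ifs <;> simp_all

lemma sig_invol {n : ℕ} (t : ℕ) : Function.Involutive (sig n t) := by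
  intro v
  apply Fin.ext
  rw [sig_coe, sig_coe]
  have hv := v.isLt
  split_ifs <;> first | omega | exact (by assumption : False).elim

lemma sig_adj {n : ℕ} (t : ℕ) (v : Fin n) :
    sig n t v = v ∨ (SimpleGraph.pathGraph n).Adj v (sig n t v) := by
  by_cases he : sig n t v = v
  · left; exact he
  · right
    rw [SimpleGraph.pathGraph_adj]
    have hne : (sig n t v : ℕ) ≠ (v : ℕ) := fun h => he (Fin.ext h)
    rw [sig_coe] at hne ⊢
    split_ifs at hne ⊢ <;> omega

lemma pos_succ {n : ℕ} (t : ℕ) (i : Fin n) : pos (t+1) i = sig n t (pos t i) := by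
  have hn : 0 < n := i.pos
  set x : ℤ := vres i + (t:ℤ) with hxdef
  set r : ℤ := x % (2 * (n:ℤ)) with hr
  obtain ⟨hr1, hr2⟩ := emod_bounds hn x
  rw [← hr] at hr1 hr2
  have hv : ((pos t i : ℕ) : ℤ) = fold n x := pos_coe t i
  have hv' : ((pos (t+1) i : ℕ) : ℤ) = fold n (x + 1) := by
    rw [pos_coe]
    congr 1
    push_cast
    ring
  obtain ⟨k, hk⟩ := vres_even i
  have hpar : x % 2 = (t:ℤ) % 2 := by omega
  have hmod2 : x % (2 * (n:ℤ)) % 2 = x % 2 :=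
    Int.emod_emod_of_dvd x ⟨(n:ℤ), by ring⟩
  rw [← hr] at hmod2
  have hq := Int.mul_ediv_add_emod x (2*(n:ℤ))
  have key : (x + 1) % (2 * (n:ℤ)) = (r + 1) % (2 * (n:ℤ)) := by
    have h5 : x + 1 = (r + 1) + 2*(n:ℤ) * (x / (2*(n:ℤ))) := by
      rw [hr]; linarith
    rw [h5, Int.add_mul_emod_self_left]
  have hfoldx : fold n x = if r < (n:ℤ) then r else 2*(n:ℤ) - 1 - r := rfl
  have hfoldx1 : fold n (x+1) = if (x+1) % (2*(n:ℤ)) < (n:ℤ) then (x+1) % (2*(n:ℤ))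
      else 2*(n:ℤ) - 1 - (x+1) % (2*(n:ℤ)) := rfl
  have hvlt := (pos t i).isLt
  apply Fin.ext
  rw [sig_coe]
  rcases lt_or_ge r (2*(n:ℤ) - 1) with hc | hc
  · -- r + 1 < 2n
    have key2 : (x + 1) % (2 * (n:ℤ)) = r + 1 := by
      rw [key]; exact Int.emod_eq_of_lt (by omega) (by omega)
    rw [key2] at hfoldx1
    rw [hfoldx] at hv
    rw [hfoldx1] at hv'
    split_ifs at hv hv' <;> split_ifs <;> omega
  · -- r = 2n - 1
    have hc' : r = 2*(n:ℤ) - 1 := by omega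
    have key2 : (x + 1) % (2 * (n:ℤ)) = 0 := by
      rw [key, hc', show 2*(n:ℤ) - 1 + 1 = 2*(n:ℤ) by ring, Int.emod_self]
    rw [key2] at hfoldx1
    rw [hfoldx] at hv
    rw [hfoldx1] at hv'
    split_ifs at hv hv' <;> split_ifs <;> omega

lemma adj_core {n : ℕ} {a b : Fin n} (hab : a ≠ b) (t : ℕ)
    (h : (2*(n:ℤ)) ∣ (vres a + vres b + 2*t) ∨ (2*(n:ℤ)) ∣ (vres a + vres b + 2*t + 2)) :
    (SimpleGraph.pathGraph n).Adj (pos t a) (pos t b) := by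
  have hn : 0 < n := a.pos
  set x : ℤ := vres a + (t:ℤ) with hx
  set y : ℤ := vres b + (t:ℤ) with hy
  set r : ℤ := x % (2 * (n:ℤ)) with hr
  set q : ℤ := y % (2 * (n:ℤ)) with hq
  obtain ⟨hr1, hr2⟩ := emod_bounds hn x
  obtain ⟨hq1, hq2⟩ := emod_bounds hn y
  rw [← hr] at hr1 hr2
  rw [← hq] at hq1 hq2
  have hqx := Int.mul_ediv_add_emod x (2*(n:ℤ))
  have hqy := Int.mul_ediv_add_emod y (2*(n:ℤ))
  rw [← hr] at hqx
  rw [← hq] at hqy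
  have hrq : r ≠ q := by
    intro he
    apply hab
    apply pos_inj t
    apply Fin.ext
    have h1 : fold n x = fold n y := fold_congr (by rw [← hr, ← hq]; exact he)
    have h2 := pos_coe t a
    have h3 := pos_coe t b
    rw [← hx] at h2
    rw [← hy] at h3
    omega
  -- establish r + q = 2n or r + q = 2n - 2
  have hsum : r + q = 2*(n:ℤ) ∨ r + q = 2*(n:ℤ) - 2 := by
    rcases h with ⟨m, hm⟩ | ⟨m, hm⟩
    · -- x + y = vres a + vres b + 2t = 2n*m ; r + q = 2n*(m - qx - qy)
      have h4 : r + q = 2*(n:ℤ) * (m - x / (2*(n:ℤ)) - y / (2*(n:ℤ))) := by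
        have h5 : x + y = 2*(n:ℤ)*m := by rw [hx, hy]; push_cast at hm ⊢; linarith
        nlinarith [hqx, hqy, h5]
      set M : ℤ := m - x / (2*(n:ℤ)) - y / (2*(n:ℤ)) with hM
      have hM1 : 0 ≤ M := by
        by_contra hneg
        push_neg at hneg
        have : 2*(n:ℤ)*M ≤ 2*(n:ℤ)*(-1) := by
          apply mul_le_mul_of_nonneg_left (by omega) (by positivity)
        omega
      have hM2 : M < 2 := by
        by_contra hge
        push_neg at hge
        have : 2*(n:ℤ)*2 ≤ 2*(n:ℤ)*M := by
          apply mul_le_mul_of_nonneg_left hge (by positivity)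
        omega
      interval_cases M <;> omega
    · have h4 : r + q + 2 = 2*(n:ℤ) * (m - x / (2*(n:ℤ)) - y / (2*(n:ℤ))) := by
        have h5 : x + y + 2 = 2*(n:ℤ)*m := by rw [hx, hy]; push_cast at hm ⊢; linarith
        nlinarith [hqx, hqy, h5]
      set M : ℤ := m - x / (2*(n:ℤ)) - y / (2*(n:ℤ)) with hM
      have hM1 : 0 < M := by
        by_contra hneg
        push_neg at hneg
        have : 2*(n:ℤ)*M ≤ 2*(n:ℤ)*0 := by
          apply mul_le_mul_of_nonneg_left (by omega) (by positivity)
        omega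
      have hM2 : M < 2 := by
        by_contra hge
        push_neg at hge
        have : 2*(n:ℤ)*2 ≤ 2*(n:ℤ)*M := by
          apply mul_le_mul_of_nonneg_left hge (by positivity)
        omega
      interval_cases M <;> omega
  have hA : ((pos t a : ℕ) : ℤ) = if r < (n:ℤ) then r else 2*(n:ℤ) - 1 - r := by
    have := pos_coe t a
    rw [← hx] at this
    exact this
  have hB : ((pos t b : ℕ) : ℤ) = if q < (n:ℤ) then q else 2*(n:ℤ) - 1 - q := by
    have := pos_coe t b
    rw [← hy] at this
    exact this
  rw [SimpleGraph.pathGraph_adj]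
  split_ifs at hA hB <;> omega

lemma exists_adj {n : ℕ} (hn : 3 ≤ n) {a b : Fin n} (hab : a ≠ b) :
    ∃ t ≤ n - 2, (SimpleGraph.pathGraph n).Adj (pos t a) (pos t b) := by
  obtain ⟨α, hα⟩ := vres_even a
  obtain ⟨β, hβ⟩ := vres_even b
  have hn0 : (0:ℤ) < (n:ℤ) := by exact_mod_cast (by omega : 0 < n)
  set t0 : ℕ := ((-(α+β)) % (n:ℤ)).toNat with ht0
  have h1 : 0 ≤ (-(α+β)) % (n:ℤ) := Int.emod_nonneg _ (by omega)
  have h2 : (-(α+β)) % (n:ℤ) < (n:ℤ) := Int.emod_lt_of_pos _ hn0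
  have ht0' : (t0:ℤ) = (-(α+β)) % (n:ℤ) := Int.toNat_of_nonneg h1
  have hdvd : (n:ℤ) ∣ (α + β + t0) := by
    have hq := Int.mul_ediv_add_emod (-(α+β)) (n:ℤ)
    exact ⟨-((-(α+β)) / (n:ℤ)), by linarith⟩
  have ht0n : t0 < n := by omega
  obtain ⟨m, hm⟩ := hdvd
  rcases le_or_gt t0 (n-2) with hle | hgt
  · refine ⟨t0, hle, adj_core hab t0 (Or.inl ⟨m, ?_⟩)⟩
    rw [hα, hβ]
    linarith
  · have ht0e : t0 = n - 1 := by omega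
    refine ⟨n-2, le_refl _, adj_core hab (n-2) (Or.inr ⟨m, ?_⟩)⟩
    rw [hα, hβ]
    have hc : ((n-2 : ℕ) : ℤ) = (n:ℤ) - 2 := by
      have : (2:ℕ) ≤ n := by omega
      push_cast [this]
      ring
    rw [hc]
    have hc2 : (t0 : ℤ) = (n:ℤ) - 1 := by
      rw [ht0e]
      have : (1:ℕ) ≤ n := by omega
      push_cast [this]
      ring
    linarith

end ACPath

/-- The acquaintance time of the `n`-vertex path is at most `n - 2`. -/
theorem AC_path_le (n : ℕ) (hn : 3 ≤ n) : AC (SimpleGraph.pathGraph n) ≤ n - 2 := by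
  apply Nat.sInf_le
  refine ⟨fun t => ACPath.fperm n t, ACPath.fperm_zero n, ?_, ?_⟩
  · intro t _
    refine ⟨(ACPath.sig_invol (n := n) t).toPerm, ?_, ?_, ?_⟩
    · intro v
      simp [Function.Involutive.coe_toPerm, ACPath.sig_invol t v]
    · intro v
      simpa [Function.Involutive.coe_toPerm] using ACPath.sig_adj t v
    · intro i
      simp only [Function.Involutive.coe_toPerm, ACPath.fperm_apply]
      exact ACPath.pos_succ t i
  · intro a b hab
    obtain ⟨t, ht, hadj⟩ := ACPath.exists_adj hn hab
    exact ⟨t, ht, by rw [ACPath.fperm_apply, ACPath.fperm_apply]; exact hadj⟩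
end

section
/- The acquaintance time of the barbell graph B_n satisfies AC(B_n) ≥ n − 2 for all n ≥ 2. -/
/-!
Let `S` be one clique and `g₁ ∈ S`, `g₂ ∉ S` the ends of the bridge, so that agents change
sides only by crossing the bridge. Call an agent a leaver if it ever leaves its home side and a
stayer otherwise; let `b` be the number of rounds that use the bridge and `r` the number of other
rounds that change the pair of agents standing on `g₁, g₂`, so `b + r ≤ m`.
A leaver first exits in a bridge round, from its home gate, so each side has at most `b`
leavers. Before that it enters its home gate from inside its home side, in one of the `r`
rounds, so each side also has at most `r + 1` leavers (one may start on the gate). A stayer of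
one side can meet a stayer of the other only on the two gates, so every such pair, and some pair
containing any given leaver, occurs as the pair on the gates, which takes at most `r + 1` values.
When both sides have stayers these counts give `n ≤ m + 2`; otherwise one side consists of
leavers and `m ≥ 2 ⌊n/2⌋ - 1`.
-/

open Finset

section MatchingStep

variable {V : Type*} {G : SimpleGraph V} {x y : Equiv.Perm V}

theorem isMatchingStep_iff :
    IsMatchingStep G x y ↔ (∀ v, (y * x⁻¹) ((y * x⁻¹) v) = v) ∧
      ∀ v, (y * x⁻¹) v = v ∨ G.Adj v ((y * x⁻¹) v) := by
  constructor
  · rintro ⟨σ, hinv, hadj, happ⟩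
    have hσ : y * x⁻¹ = σ := Equiv.ext fun v => by simpa using happ (x⁻¹ v)
    exact hσ ▸ ⟨hinv, hadj⟩
  · rintro ⟨hinv, hadj⟩
    exact ⟨y * x⁻¹, hinv, hadj, fun a => by simp⟩

theorem IsMatchingStep.symm (h : IsMatchingStep G x y) : IsMatchingStep G y x := by
  obtain ⟨σ, hinv, hadj, happ⟩ := h
  exact ⟨σ, hinv, hadj, fun a => by rw [happ, hinv]⟩

theorem isMatchingStep_swap_mul [DecidableEq V] {u v : V} (huv : u = v ∨ G.Adj u v)
    (x : Equiv.Perm V) : IsMatchingStep G x (Equiv.swap u v * x) := by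
  refine ⟨Equiv.swap u v, Equiv.swap_apply_self u v, fun w => ?_, fun _ => rfl⟩
  rcases huv with rfl | huv
  · simp
  by_cases hwu : w = u
  · subst hwu; simp [huv]
  by_cases hwv : w = v
  · subst hwv; simp [huv.symm]
  · simp [Equiv.swap_apply_of_ne_of_ne hwu hwv]

variable {f : ℕ → Equiv.Perm V} {m t : ℕ}

def roundPerm (f : ℕ → Equiv.Perm V) (t : ℕ) : Equiv.Perm V := f (t + 1) * (f t)⁻¹

@[simp]
theorem roundPerm_apply_apply (t : ℕ) (a : V) : roundPerm f t (f t a) = f (t + 1) a := by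
  simp [roundPerm]

theorem roundPerm_involutive (hstep : ∀ t < m, IsMatchingStep G (f t) (f (t + 1)))
    (ht : t < m) (v : V) : roundPerm f t (roundPerm f t v) = v :=
  (isMatchingStep_iff.1 (hstep t ht)).1 v

theorem apply_succ_eq_or_adj (hstep : ∀ t < m, IsMatchingStep G (f t) (f (t + 1)))
    (ht : t < m) (a : V) : f (t + 1) a = f t a ∨ G.Adj (f t a) (f (t + 1) a) := by
  simpa using (isMatchingStep_iff.1 (hstep t ht)).2 (f t a)

end MatchingStep

theorem Nat.exists_forall_le_and_not_succ {p : ℕ → Prop} (h0 : p 0) {t : ℕ} (ht : ¬ p t) :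
    ∃ s < t, (∀ u ≤ s, p u) ∧ ¬ p (s + 1) := by
  classical
  have hex : ∃ u, ¬ p u := ⟨t, ht⟩
  have hpos : Nat.find hex ≠ 0 := fun h => Nat.find_spec hex (h ▸ h0)
  refine ⟨Nat.find hex - 1, ?_, fun u hu => ?_, ?_⟩
  · have := Nat.find_min' hex ht; omega
  · exact not_not.1 (Nat.find_min hex (by omega))
  · rw [Nat.sub_add_cancel (Nat.pos_of_ne_zero hpos)]; exact Nat.find_spec hex

theorem Finset.card_image_range_succ_le {α : Type*} [DecidableEq α] (g : ℕ → α) (m : ℕ) :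
    #((range (m + 1)).image g) ≤ #((range m).filter fun t => g (t + 1) ≠ g t) + 1 := by
  induction m with
  | zero => simp
  | succ m ih =>
    have hfilter : (range (m + 1)).filter (fun t => g (t + 1) ≠ g t) =
        if g (m + 1) ≠ g m then insert m ((range m).filter fun t => g (t + 1) ≠ g t)
        else (range m).filter fun t => g (t + 1) ≠ g t := by
      rw [range_add_one, filter_insert]
    rw [range_add_one (n := m + 1), image_insert, hfilter]
    split_ifs with h
    · have hm : m ∉ (range m).filter fun t => g (t + 1) ≠ g t := by simp
      rw [card_insert_of_notMem hm]
      exact (card_insert_le _ _).trans (by omega)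
    · rw [not_not.1 h, insert_eq_of_mem (mem_image_of_mem g (self_mem_range_succ m))]
      exact ih

theorem two_mul_card_mul_add_card_le {V : Type*} {E : Finset (Sym2 V)} {A B C : Finset V}
    (hAB : Disjoint A B) (hCA : Disjoint C A) (hCB : Disjoint C B)
    (hE : ∀ a ∈ A, ∀ b ∈ B, s(a, b) ∈ E) (hC : ∀ c ∈ C, ∃ e ∈ E, c ∈ e) :
    2 * (#A * #B) + #C ≤ 2 * #E := by
  classical
  set E₁ := (A ×ˢ B).image fun p => s(p.1, p.2)
  set E₂ := E.filter fun e => ∃ c ∈ C, c ∈ e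
  have hE₁ : #E₁ = #A * #B := by
    rw [card_image_of_injOn, card_product]
    rintro ⟨a, b⟩ hab ⟨a', b'⟩ hab' h
    simp only [coe_product, Set.mem_prod, mem_coe] at hab hab'
    rcases Sym2.eq_iff.1 h with ⟨rfl, rfl⟩ | ⟨rfl, -⟩
    · rfl
    · exact absurd hab'.2 (disjoint_left.1 hAB hab.1)
  have hE₂ : #C ≤ 2 * #E₂ := by
    have hcover : C ⊆ E₂.biUnion Sym2.toFinset := fun c hc => by
      obtain ⟨e, he, hce⟩ := hC c hc
      exact mem_biUnion.2 ⟨e, mem_filter.2 ⟨he, c, hc, hce⟩, Sym2.mem_toFinset.2 hce⟩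
    calc #C ≤ ∑ e ∈ E₂, #e.toFinset := (card_le_card hcover).trans card_biUnion_le
      _ ≤ ∑ _e ∈ E₂, 2 := sum_le_sum fun e _ => by rw [Sym2.card_toFinset]; split_ifs <;> omega
      _ = 2 * #E₂ := by rw [sum_const, smul_eq_mul, mul_comm]
  have hdisj : Disjoint E₁ E₂ := by
    refine disjoint_left.2 fun e he₁ he₂ => ?_
    obtain ⟨⟨a, b⟩, hab, rfl⟩ := mem_image.1 he₁
    obtain ⟨-, c, hc, hce⟩ := mem_filter.1 he₂
    rw [mem_product] at hab
    rcases Sym2.mem_iff.1 hce with rfl | rfl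
    · exact disjoint_left.1 hCA hc hab.1
    · exact disjoint_left.1 hCB hc hab.2
  have hsub : E₁ ∪ E₂ ⊆ E := union_subset
    (fun e he => by
      obtain ⟨⟨a, b⟩, hab, rfl⟩ := mem_image.1 he
      exact hE a (mem_product.1 hab).1 b (mem_product.1 hab).2)
    (filter_subset _ _)
  have := card_le_card hsub
  rw [card_union_of_disjoint hdisj] at this
  omega

section LowerBound

variable {V : Type*} {G : SimpleGraph V} {S : Finset V} {g₁ g₂ : V}
  {f : ℕ → Equiv.Perm V} {m : ℕ}

structure SoleExit (G : SimpleGraph V) (S : Finset V) (g₁ g₂ : V) : Prop where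
  mem : g₁ ∈ S
  notMem : g₂ ∉ S
  eq_of_adj : ∀ ⦃u v⦄, G.Adj u v → u ∈ S → v ∉ S → u = g₁ ∧ v = g₂

theorem SoleExit.eq_of_exit (hS : SoleExit G S g₁ g₂)
    (hstep : ∀ t < m, IsMatchingStep G (f t) (f (t + 1))) {t : ℕ} (ht : t < m) {a : V}
    (hin : f t a ∈ S) (hout : f (t + 1) a ∉ S) : f t a = g₁ ∧ f (t + 1) a = g₂ := by
  rcases apply_succ_eq_or_adj hstep ht a with heq | hadj
  · exact absurd (heq ▸ hin) hout
  · exact hS.eq_of_adj hadj hin hout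

theorem card_le_card_of_forall_exists_apply_eq (e : ℕ → Equiv.Perm V) (v : V) {A : Finset V}
    {T : Finset ℕ} (h : ∀ a ∈ A, ∃ t ∈ T, e t a = v) : #A ≤ #T :=
  card_le_card_of_forall_subsingleton (fun a t => e t a = v) h
    fun _ _ _ ha _ hb => (e _).injective (ha.2.trans hb.2.symm)

def gatePair (f : ℕ → Equiv.Perm V) (g₁ g₂ : V) (t : ℕ) : Sym2 V :=
  Sym2.map ⇑(f t)⁻¹ s(g₁, g₂)

theorem gatePair_comm (f : ℕ → Equiv.Perm V) (g₁ g₂ : V) :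
    gatePair f g₂ g₁ = gatePair f g₁ g₂ := by
  ext t : 1
  simp only [gatePair, Sym2.eq_swap (a := g₂)]

theorem mem_gatePair {a : V} {t : ℕ} : a ∈ gatePair f g₁ g₂ t ↔ f t a = g₁ ∨ f t a = g₂ := by
  simp only [gatePair, Sym2.map_mk, Sym2.mem_iff, Equiv.Perm.eq_inv_iff_eq, eq_comm]

variable [DecidableEq V]

theorem SoleExit.compl [Fintype V] (hS : SoleExit G S g₁ g₂) : SoleExit G Sᶜ g₂ g₁ where
  mem := mem_compl.2 hS.notMem
  notMem := not_not.2 hS.mem ∘ mem_compl.1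
  eq_of_adj _ _ huv hu hv :=
    (hS.eq_of_adj huv.symm (not_not.1 (mt mem_compl.2 hv)) (mem_compl.1 hu)).symm

def stayers (f : ℕ → Equiv.Perm V) (m : ℕ) (S : Finset V) : Finset V :=
  S.filter fun a => ∀ t ≤ m, f t a ∈ S

def leavers (f : ℕ → Equiv.Perm V) (m : ℕ) (S : Finset V) : Finset V :=
  S.filter fun a => ∃ t ≤ m, f t a ∉ S

theorem card_stayers_add_card_leavers (f : ℕ → Equiv.Perm V) (m : ℕ) (S : Finset V) :
    #(stayers f m S) + #(leavers f m S) = #S := by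
  rw [stayers, leavers, ← card_filter_add_card_filter_not (s := S) (fun a => ∀ t ≤ m, f t a ∈ S)]
  simp only [not_forall, exists_prop]

theorem disjoint_stayers_leavers (f : ℕ → Equiv.Perm V) (m : ℕ) (S : Finset V) :
    Disjoint (stayers f m S) (leavers f m S) := by
  exact disjoint_filter.2 fun _ _ hstay ⟨t, ht, hout⟩ => hout (hstay t ht)

def bridgeRounds (f : ℕ → Equiv.Perm V) (m : ℕ) (g₁ g₂ : V) : Finset ℕ :=
  (range m).filter fun t => roundPerm f t g₁ = g₂ ∧ roundPerm f t g₂ = g₁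

def gateMovingRounds (f : ℕ → Equiv.Perm V) (m : ℕ) (g₁ g₂ : V) : Finset ℕ :=
  (range m).filter fun t => Sym2.map (roundPerm f t) s(g₁, g₂) ≠ s(g₁, g₂)

theorem bridgeRounds_comm (f : ℕ → Equiv.Perm V) (m : ℕ) (g₁ g₂ : V) :
    bridgeRounds f m g₂ g₁ = bridgeRounds f m g₁ g₂ :=
  filter_congr fun _ _ => and_comm

theorem gateMovingRounds_comm (f : ℕ → Equiv.Perm V) (m : ℕ) (g₁ g₂ : V) :
    gateMovingRounds f m g₂ g₁ = gateMovingRounds f m g₁ g₂ := by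
  simp only [gateMovingRounds, Sym2.eq_swap (a := g₂)]

theorem card_bridgeRounds_add_card_gateMovingRounds_le (f : ℕ → Equiv.Perm V) (m : ℕ)
    (g₁ g₂ : V) :
    #(bridgeRounds f m g₁ g₂) + #(gateMovingRounds f m g₁ g₂) ≤ m := by
  have hdisj : Disjoint (bridgeRounds f m g₁ g₂) (gateMovingRounds f m g₁ g₂) := by
    refine disjoint_filter_filter' _ _ ?_
    intro p hbr hgt t ht
    obtain ⟨h₁, h₂⟩ := hbr t ht
    exact hgt t ht (by rw [Sym2.map_mk, h₁, h₂, Sym2.eq_swap])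
  rw [← card_union_of_disjoint hdisj]
  exact (card_le_card (union_subset (filter_subset _ _) (filter_subset _ _))).trans_eq
    (card_range m)

theorem gatePair_succ_eq_of_notMem_gateMovingRounds {t : ℕ} (ht : t < m)
    (hgt : t ∉ gateMovingRounds f m g₁ g₂) : gatePair f g₁ g₂ (t + 1) = gatePair f g₁ g₂ t := by
  have hfix : Sym2.map (roundPerm f t) s(g₁, g₂) = s(g₁, g₂) := by
    rw [gateMovingRounds, mem_filter, not_and, not_not] at hgt
    exact hgt (mem_range.2 ht)
  have hsucc : ⇑(f (t + 1))⁻¹ = ⇑(f t)⁻¹ ∘ ⇑(roundPerm f t)⁻¹ := by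
    ext v; simp [roundPerm]
  rw [gatePair, gatePair, hsucc, ← Sym2.map_map]
  congr 1
  conv_lhs => rw [← hfix]
  rw [Sym2.map_map]
  simp

theorem card_gatePairs_le (f : ℕ → Equiv.Perm V) (m : ℕ) (g₁ g₂ : V) :
    #((range (m + 1)).image (gatePair f g₁ g₂)) ≤ #(gateMovingRounds f m g₁ g₂) + 1 := by
  refine (card_image_range_succ_le _ m).trans (Nat.add_le_add_right (card_le_card ?_) 1)
  intro t ht
  rw [mem_filter, mem_range] at ht
  by_contra hgt
  exact ht.2 (gatePair_succ_eq_of_notMem_gateMovingRounds ht.1 hgt)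

theorem SoleExit.exists_exit (hS : SoleExit G S g₁ g₂) (h0 : f 0 = Equiv.refl V)
    (hstep : ∀ t < m, IsMatchingStep G (f t) (f (t + 1))) {a : V} (ha : a ∈ leavers f m S) :
    ∃ s < m, (∀ u ≤ s, f u a ∈ S) ∧ f s a = g₁ ∧ f (s + 1) a = g₂ := by
  obtain ⟨haS, t, htm, hout⟩ := mem_filter.1 ha
  obtain ⟨s, hst, hstay, hexit⟩ :=
    Nat.exists_forall_le_and_not_succ (p := fun u => f u a ∈ S) (by simpa [h0] using haS) hout
  exact ⟨s, by omega, hstay, hS.eq_of_exit hstep (by omega) (hstay s le_rfl) hexit⟩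

theorem SoleExit.card_leavers_le_card_bridgeRounds (hS : SoleExit G S g₁ g₂)
    (h0 : f 0 = Equiv.refl V) (hstep : ∀ t < m, IsMatchingStep G (f t) (f (t + 1))) :
    #(leavers f m S) ≤ #(bridgeRounds f m g₁ g₂) := by
  refine card_le_card_of_forall_exists_apply_eq f g₁ fun a ha => ?_
  obtain ⟨s, hs, -, hat, hat'⟩ := hS.exists_exit h0 hstep ha
  have hbridge : roundPerm f s g₁ = g₂ := by rw [← hat, roundPerm_apply_apply, hat']
  refine ⟨s, mem_filter.2 ⟨mem_range.2 hs, hbridge, ?_⟩, hat⟩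
  rw [← hbridge, roundPerm_involutive hstep hs]

theorem SoleExit.card_leavers_le_card_gateMovingRounds_add_one (hS : SoleExit G S g₁ g₂)
    (h0 : f 0 = Equiv.refl V) (hstep : ∀ t < m, IsMatchingStep G (f t) (f (t + 1))) :
    #(leavers f m S) ≤ #(gateMovingRounds f m g₁ g₂) + 1 := by
  have hentry :
      ∀ a ∈ (leavers f m S).erase g₁, ∃ u ∈ gateMovingRounds f m g₁ g₂, f (u + 1) a = g₁ := by
    intro a ha
    obtain ⟨hag, ha⟩ := mem_erase.1 ha
    obtain ⟨s, hs, hstay, has, -⟩ := hS.exists_exit h0 hstep ha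
    obtain ⟨u, hus, hu, hu'⟩ := Nat.exists_forall_le_and_not_succ (p := fun u => f u a ≠ g₁)
      (by simpa [h0] using hag) (not_not.2 has)
    have hentered : f (u + 1) a = g₁ := not_not.1 hu'
    have hround : roundPerm f u g₁ = f u a := by
      rw [← hentered, ← roundPerm_apply_apply, roundPerm_involutive hstep (by omega)]
    refine ⟨u, mem_filter.2 ⟨mem_range.2 (by omega), fun hfix => ?_⟩, hentered⟩
    rw [Sym2.map_mk, hround, Sym2.eq_iff] at hfix
    rcases hfix with ⟨h, -⟩ | ⟨h, -⟩
    · exact hu u le_rfl h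
    · exact hS.notMem (h ▸ hstay u (by omega))
  have := card_le_card_of_forall_exists_apply_eq (fun t => f (t + 1)) g₁ hentry
  have := pred_card_le_card_erase (s := leavers f m S) (a := g₁)
  omega

theorem SoleExit.exists_mem_gatePair (hS : SoleExit G S g₁ g₂) (h0 : f 0 = Equiv.refl V)
    (hstep : ∀ t < m, IsMatchingStep G (f t) (f (t + 1))) {a : V} (ha : a ∈ leavers f m S) :
    ∃ t ≤ m, a ∈ gatePair f g₁ g₂ t := by
  obtain ⟨s, hs, -, has, -⟩ := hS.exists_exit h0 hstep ha
  exact ⟨s, hs.le, mem_gatePair.2 (Or.inl has)⟩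

theorem SoleExit.mk_mem_image_gatePair [Fintype V] (hS : SoleExit G S g₁ g₂)
    (hmeet : ∀ a b, a ≠ b → ∃ t ≤ m, G.Adj (f t a) (f t b)) {a b : V}
    (ha : a ∈ stayers f m S) (hb : b ∈ stayers f m Sᶜ) :
    s(a, b) ∈ (range (m + 1)).image (gatePair f g₁ g₂) := by
  obtain ⟨haS, ha⟩ := mem_filter.1 ha
  obtain ⟨hbS, hb⟩ := mem_filter.1 hb
  obtain ⟨t, htm, hadj⟩ := hmeet a b (ne_of_mem_of_not_mem haS (mem_compl.1 hbS))
  obtain ⟨hta, htb⟩ := hS.eq_of_adj hadj (ha t htm) (mem_compl.1 (hb t htm))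
  refine mem_image.2 ⟨t, mem_range.2 (by omega), ?_⟩
  simp [gatePair, ← hta, ← htb]

theorem SoleExit.card_le_rounds [Fintype V] (hS : SoleExit G S g₁ g₂)
    (hf : IsAcqStrategy G m f) :
    Fintype.card V ≤ m + 2 ∨ 2 * #S ≤ m + 1 ∨ 2 * #Sᶜ ≤ m + 1 := by
  obtain ⟨h0, hstep, hmeet⟩ := hf
  have hbr := hS.card_leavers_le_card_bridgeRounds h0 hstep
  have hbr' := hS.compl.card_leavers_le_card_bridgeRounds h0 hstep
  have hgt := hS.card_leavers_le_card_gateMovingRounds_add_one h0 hstep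
  have hgt' := hS.compl.card_leavers_le_card_gateMovingRounds_add_one h0 hstep
  rw [bridgeRounds_comm] at hbr'
  rw [gateMovingRounds_comm] at hgt'
  have hsub {T : Finset V} : stayers f m T ⊆ T ∧ leavers f m T ⊆ T :=
    ⟨filter_subset _ _, filter_subset _ _⟩
  have hsides : Disjoint S Sᶜ := disjoint_compl_right
  have hleavers : Disjoint (leavers f m S) (leavers f m Sᶜ) :=
    hsides.mono hsub.2 hsub.2
  have hpairs := two_mul_card_mul_add_card_le (E := (range (m + 1)).image (gatePair f g₁ g₂))
    (C := leavers f m S ∪ leavers f m Sᶜ) (hsides.mono hsub.1 hsub.1)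
    (disjoint_union_left.2
      ⟨(disjoint_stayers_leavers f m S).symm, hsides.symm.mono hsub.2 hsub.1⟩)
    (disjoint_union_left.2
      ⟨hsides.mono hsub.2 hsub.1, (disjoint_stayers_leavers f m Sᶜ).symm⟩)
    (fun a ha b hb => hS.mk_mem_image_gatePair hmeet ha hb) fun c hc => by
      rcases mem_union.1 hc with hc | hc
      · obtain ⟨t, ht, hct⟩ := hS.exists_mem_gatePair h0 hstep hc
        exact ⟨_, mem_image_of_mem _ (mem_range.2 (by omega)), hct⟩
      · obtain ⟨t, ht, hct⟩ := hS.compl.exists_mem_gatePair h0 hstep hc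
        rw [gatePair_comm] at hct
        exact ⟨_, mem_image_of_mem _ (mem_range.2 (by omega)), hct⟩
  rw [card_union_of_disjoint hleavers] at hpairs
  have hE := card_gatePairs_le f m g₁ g₂
  have hrounds := card_bridgeRounds_add_card_gateMovingRounds_le f m g₁ g₂
  have hS₁ := card_stayers_add_card_leavers f m S
  have hS₂ := card_stayers_add_card_leavers f m Sᶜ
  have hV := card_add_card_compl S
  set α := #(stayers f m S)
  set β := #(stayers f m Sᶜ)
  rcases Nat.eq_zero_or_pos α with hα | hα
  · omega
  rcases Nat.eq_zero_or_pos β with hβ | hβ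
  · omega
  have : α + β ≤ α * β + 1 := by nlinarith
  omega

end LowerBound

section Shuttle

variable {V : Type*} [DecidableEq V] {G : SimpleGraph V} {g₁ g₂ : V} {b : ℕ → V}

/-- In the block of rounds `4 i + 1, …, 4 i + 4` the visitor `b i` is swapped onto `g₂`,
crosses the bridge to `g₁`, and both moves are undone again. -/
def shuttle (g₁ g₂ : V) (b : ℕ → V) (t : ℕ) : Equiv.Perm V :=
  if t % 4 = 0 then 1
  else if t % 4 = 2 then Equiv.swap g₁ g₂ * Equiv.swap g₂ (b (t / 4))
  else Equiv.swap g₂ (b (t / 4))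

theorem shuttle_zero : shuttle g₁ g₂ b 0 = 1 := rfl

theorem shuttle_isMatchingStep (h₁₂ : G.Adj g₁ g₂) (hb : ∀ i, g₂ = b i ∨ G.Adj g₂ (b i))
    (t : ℕ) : IsMatchingStep G (shuttle g₁ g₂ b t) (shuttle g₁ g₂ b (t + 1)) := by
  have hdiv : t % 4 ≠ 3 → (t + 1) / 4 = t / 4 := by omega
  rcases (by omega : t % 4 = 0 ∨ t % 4 = 1 ∨ t % 4 = 2 ∨ t % 4 = 3) with h | h | h | h
  · have : shuttle g₁ g₂ b (t + 1) = Equiv.swap g₂ (b (t / 4)) * shuttle g₁ g₂ b t := by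
      simp [shuttle, h, hdiv, show (t + 1) % 4 = 1 by omega]
    exact this ▸ isMatchingStep_swap_mul (hb _) _
  · have : shuttle g₁ g₂ b (t + 1) = Equiv.swap g₁ g₂ * shuttle g₁ g₂ b t := by
      simp [shuttle, h, hdiv, show (t + 1) % 4 = 2 by omega]
    exact this ▸ isMatchingStep_swap_mul (Or.inr h₁₂) _
  · have : shuttle g₁ g₂ b t = Equiv.swap g₁ g₂ * shuttle g₁ g₂ b (t + 1) := by
      simp [shuttle, h, hdiv, show (t + 1) % 4 = 3 by omega]
    exact (this ▸ isMatchingStep_swap_mul (Or.inr h₁₂) _ :).symm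
  · have : shuttle g₁ g₂ b t = Equiv.swap g₂ (b (t / 4)) * shuttle g₁ g₂ b (t + 1) := by
      simp [shuttle, h, show (t + 1) % 4 = 0 by omega]
    exact (this ▸ isMatchingStep_swap_mul (hb _) _ :).symm

theorem shuttle_adj_visitor (h₁₂ : G.Adj g₁ g₂) (i : ℕ) {a : V} (hab : a ≠ b i) (ha₂ : a ≠ g₂)
    (ha₁ : a = g₁ ∨ G.Adj a g₁) :
    G.Adj (shuttle g₁ g₂ b (4 * i + 2) a) (shuttle g₁ g₂ b (4 * i + 2) (b i)) := by
  have hround : shuttle g₁ g₂ b (4 * i + 2) = Equiv.swap g₁ g₂ * Equiv.swap g₂ (b i) := by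
    simp [shuttle, show (4 * i + 2) % 4 = 2 by omega, show (4 * i + 2) / 4 = i by omega]
  rw [hround, Equiv.Perm.mul_apply, Equiv.Perm.mul_apply, Equiv.swap_apply_right,
    Equiv.swap_apply_right, Equiv.swap_apply_of_ne_of_ne ha₂ hab]
  rcases ha₁ with rfl | ha₁
  · rw [Equiv.swap_apply_left]; exact h₁₂.symm
  · rw [Equiv.swap_apply_of_ne_of_ne ha₁.ne ha₂]; exact ha₁

end Shuttle

theorem le_AC {V : Type*} {G : SimpleGraph V} {c : ℕ}
    (hex : ∃ m f, IsAcqStrategy G m f) (hc : ∀ m f, IsAcqStrategy G m f → c ≤ m) :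
    c ≤ AC G := by
  obtain ⟨f, hf⟩ := Nat.sInf_mem hex
  exact hc _ f hf

section Barbell

variable {n : ℕ} {u v : Fin n}

theorem barbell_adj_of_lt (huv : u ≠ v) (hu : (u : ℕ) < (n + 1) / 2)
    (hv : (v : ℕ) < (n + 1) / 2) :
    (barbell n).Adj u v := by
  simp [barbell, huv, hu, hv]

theorem barbell_adj_of_le (huv : u ≠ v) (hu : (n + 1) / 2 ≤ (u : ℕ))
    (hv : (n + 1) / 2 ≤ (v : ℕ)) :
    (barbell n).Adj u v := by
  simp [barbell, huv, hu, hv]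

theorem barbell_adj_bridge (hu : (u : ℕ) = (n + 1) / 2 - 1) (hv : (v : ℕ) = (n + 1) / 2) :
    (barbell n).Adj u v := by
  have huv : u ≠ v := fun h => by have := v.isLt; rw [h] at hu; omega
  simp [barbell, huv, hu, hv]

def barbellLeft (n : ℕ) : Finset (Fin n) := univ.filter fun i => (i : ℕ) < (n + 1) / 2

theorem card_barbellLeft : #(barbellLeft n) = (n + 1) / 2 := by
  rw [barbellLeft, Fin.card_filter_val_lt]; omega

theorem card_barbellLeft_compl : #(barbellLeft n)ᶜ = n / 2 := by
  rw [card_compl, card_barbellLeft, Fintype.card_fin]; omega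

theorem barbell_soleExit {g₁ g₂ : Fin n} (h₁ : (g₁ : ℕ) = (n + 1) / 2 - 1)
    (h₂ : (g₂ : ℕ) = (n + 1) / 2) : SoleExit (barbell n) (barbellLeft n) g₁ g₂ where
  mem := by have := g₂.isLt; simp [barbellLeft]; omega
  notMem := by simp [barbellLeft, h₂]
  eq_of_adj u v huv hu hv := by
    simp only [barbellLeft, mem_filter, mem_univ, true_and, not_lt] at hu hv
    simp only [barbell, SimpleGraph.fromRel_adj] at huv
    refine ⟨Fin.ext ?_, Fin.ext ?_⟩ <;> omega

theorem barbell_exists_strategy (hn : 2 ≤ n) : ∃ m f, IsAcqStrategy (barbell n) m f := by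
  set k := (n + 1) / 2
  let g₁ : Fin n := ⟨k - 1, by omega⟩
  let g₂ : Fin n := ⟨k, by omega⟩
  let b : ℕ → Fin n := fun i => ⟨min (k + i) (n - 1), by omega⟩
  have h₁₂ : (barbell n).Adj g₁ g₂ := barbell_adj_bridge rfl rfl
  have hb : ∀ i, g₂ = b i ∨ (barbell n).Adj g₂ (b i) := fun i => by
    by_cases h : g₂ = b i
    · exact Or.inl h
    · exact Or.inr (barbell_adj_of_le h le_rfl (by simp [b]; omega))
  have hcross : ∀ a c : Fin n, (a : ℕ) < k → k ≤ (c : ℕ) →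
      ∃ t ≤ 4 * (n - k), (barbell n).Adj (shuttle g₁ g₂ b t a) (shuttle g₁ g₂ b t c) := by
    intro a c ha hc
    have hbc : b (c - k) = c := Fin.ext (by simp [b]; omega)
    have hac : a ≠ b (c - k) := fun h => by rw [hbc] at h; rw [h] at ha; omega
    have ha₂ : a ≠ g₂ := fun h => by rw [h] at ha; simp [g₂] at ha
    have ha₁ : a = g₁ ∨ (barbell n).Adj a g₁ := by
      by_cases h : a = g₁
      · exact Or.inl h
      · exact Or.inr (barbell_adj_of_lt h ha (by simp [g₁]; omega))
    have hadj := shuttle_adj_visitor h₁₂ (c - k) hac ha₂ ha₁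
    rw [hbc] at hadj
    exact ⟨_, by omega, hadj⟩
  refine ⟨4 * (n - k), shuttle g₁ g₂ b, shuttle_zero, fun t _ => shuttle_isMatchingStep h₁₂ hb t,
    fun a c hac => ?_⟩
  rcases lt_or_ge (a : ℕ) k with ha | ha <;> rcases lt_or_ge (c : ℕ) k with hc | hc
  · exact ⟨0, Nat.zero_le _, by simpa [shuttle_zero] using barbell_adj_of_lt hac ha hc⟩
  · exact hcross a c ha hc
  · obtain ⟨t, ht, hadj⟩ := hcross c a hc ha
    exact ⟨t, ht, hadj.symm⟩
  · exact ⟨0, Nat.zero_le _, by simpa [shuttle_zero] using barbell_adj_of_le hac ha hc⟩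

theorem sub_two_le_of_isAcqStrategy_barbell {m : ℕ} {f : ℕ → Equiv.Perm (Fin n)} (hn : 2 ≤ n)
    (hf : IsAcqStrategy (barbell n) m f) : n - 2 ≤ m := by
  have hS := barbell_soleExit (g₁ := ⟨(n + 1) / 2 - 1, by omega⟩) (g₂ := ⟨(n + 1) / 2, by omega⟩)
    rfl rfl
  have := hS.card_le_rounds hf
  rw [card_barbellLeft, card_barbellLeft_compl, Fintype.card_fin] at this
  omega

end Barbell

/-- The acquaintance time of the barbell graph on `n` vertices is at least `n - 2`. -/
theorem AC_barbell_ge (n : ℕ) (hn : 2 ≤ n) : n - 2 ≤ AC (barbell n) :=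
  le_AC (barbell_exists_strategy hn) fun _ _ => sub_two_le_of_isAcqStrategy_barbell hn
end

section
/- Let T be a tree on n vertices with a DFS contour walk Γ of length 2n − 3 (the contour with one edge removed). Then one can choose n positions on Γ whose images are exactly the n distinct vertices of T, such that any two consecutive chosen positions along Γ are at distance at most 3 on Γ. -/
/-!
Measure depth as the distance from the start `u` of the walk; consecutive positions differ in
depth by exactly one. In a tree every walk from `u` to `x` crosses the dart from the parent of `x`
to `x`, and every walk from the parent to `x` does too. Since the walk repeats no dart, a step
down arrives at the first visit of its endpoint and a step up leaves from the last visit of its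
start. Select each vertex at its first visit if its depth is even and at its last visit if it is
odd: then of two consecutive positions starting at odd depth one is selected, and since among
any two consecutive positions one has odd depth, selected positions are at most three apart.
-/

open Finset

theorem Finset.orderEmbOfFin_succ_sub_le {m n d : ℕ} {S : Finset (Fin m)} (h : S.card = n)
    (hgap : ∀ a ∈ S, ∀ b ∈ S, (a : ℕ) + d < b → ∃ c ∈ S, a < c ∧ c < b)
    {i : ℕ} (hi : i + 1 < n) :
    (S.orderEmbOfFin h ⟨i + 1, hi⟩ : ℕ) - S.orderEmbOfFin h ⟨i, by omega⟩ ≤ d := by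
  by_contra! hlt
  obtain ⟨c, hc, hac, hcb⟩ := hgap _ (S.orderEmbOfFin_mem h ⟨i, by omega⟩) _
    (S.orderEmbOfFin_mem h ⟨i + 1, hi⟩) (by omega)
  obtain ⟨k, rfl⟩ : c ∈ Set.range (S.orderEmbOfFin h) := by
    rwa [Finset.range_orderEmbOfFin]
  simp only [OrderEmbedding.lt_iff_lt, Fin.lt_def] at hac hcb
  omega

theorem exists_strictMono_bijective_comp_of_gap {α : Type*} [Fintype α] {m n d : ℕ}
    (hα : Fintype.card α = n) (f : Fin m → α) (S : Finset (Fin m)) (hinj : Set.InjOn f S)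
    (hsurj : ∀ x, ∃ i ∈ S, f i = x)
    (hgap : ∀ a ∈ S, ∀ b ∈ S, (a : ℕ) + d < b → ∃ c ∈ S, a < c ∧ c < b) :
    ∃ s : Fin n → Fin m, StrictMono s ∧ Function.Bijective (f ∘ s) ∧
      ∀ i : ℕ, (h : i + 1 < n) → (s ⟨i + 1, h⟩ : ℕ) - (s ⟨i, by omega⟩ : ℕ) ≤ d := by
  have hcard : S.card = n := by
    rw [← hα, ← Finset.card_univ]
    exact Finset.card_nbij f (fun _ _ => Finset.mem_coe.2 (Finset.mem_univ _)) hinj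
      (fun x _ => by simpa using hsurj x)
  refine ⟨S.orderEmbOfFin hcard, (S.orderEmbOfFin hcard).strictMono, ?_,
    fun i hi => Finset.orderEmbOfFin_succ_sub_le hcard hgap hi⟩
  rw [Fintype.bijective_iff_injective_and_card, Fintype.card_fin, hα]
  exact ⟨fun k l hkl => (S.orderEmbOfFin hcard).injective
    (hinj (S.orderEmbOfFin_mem hcard k) (S.orderEmbOfFin_mem hcard l) hkl), rfl⟩

namespace SimpleGraph

variable {V : Type*} {G : SimpleGraph V}

theorem IsAcyclic.dart_mem_darts_of_isPath (hG : G.IsAcyclic) {c p x : V} {P : G.Walk c p}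
    (hP : P.IsPath) (hx : x ∉ P.support) (h : G.Adj p x) (q : G.Walk c x) :
    ⟨(p, x), h⟩ ∈ q.darts := by
  classical
  have hq : q.bypass = P.concat h := congrArg Subtype.val <|
    (hG.subsingleton_path c x).elim ⟨_, q.bypass_isPath⟩ ⟨_, hP.concat hx h⟩
  apply q.darts_bypass_subset_darts
  simp [hq, Walk.darts_concat]

theorem IsAcyclic.dart_mem_darts_of_dist_eq_add_one (hG : G.IsAcyclic) {r p x : V}
    (hr : G.Reachable r p) (h : G.Adj p x) (hd : G.dist r x = G.dist r p + 1)
    (q : G.Walk r x) : ⟨(p, x), h⟩ ∈ q.darts := by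
  classical
  obtain ⟨P, hP, hlen⟩ := hr.exists_path_of_dist
  refine hG.dart_mem_darts_of_isPath hP (fun hx => ?_) h q
  have := (dist_le (P.takeUntil x hx)).trans (P.length_takeUntil_le_length hx)
  omega

namespace Walk

variable {u v : V}

def IsFirstVisit (w : G.Walk u v) (i : ℕ) : Prop :=
  ∀ j < i, w.getVert j ≠ w.getVert i

def IsLastVisit (w : G.Walk u v) (i : ℕ) : Prop :=
  ∀ j, i < j → j ≤ w.length → w.getVert j ≠ w.getVert i

def IsSelected (w : G.Walk u v) (i : ℕ) : Prop :=
  Even (G.dist u (w.getVert i)) ∧ w.IsFirstVisit i ∨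
    Odd (G.dist u (w.getVert i)) ∧ w.IsLastVisit i

theorem exists_isFirstVisit {w : G.Walk u v} {x : V} (hx : x ∈ w.support) :
    ∃ i ≤ w.length, w.getVert i = x ∧ w.IsFirstVisit i := by
  classical
  have hex := mem_support_iff_exists_getVert.mp hx
  obtain ⟨hix, hi⟩ := Nat.find_spec hex
  exact ⟨_, hi, hix, fun j hj hjx => Nat.find_min hex hj ⟨hjx.trans hix, by omega⟩⟩

theorem exists_isLastVisit {w : G.Walk u v} {x : V} (hx : x ∈ w.support) :
    ∃ i ≤ w.length, w.getVert i = x ∧ w.IsLastVisit i := by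
  classical
  obtain ⟨k, hkx, hk⟩ := mem_support_iff_exists_getVert.mp hx
  have hix := Nat.findGreatest_spec (P := fun i => w.getVert i = x) hk hkx
  exact ⟨_, Nat.findGreatest_le _, hix,
    fun j hj hjL hjx => Nat.findGreatest_is_greatest hj hjL (hjx.trans hix)⟩

theorem exists_isSelected {w : G.Walk u v} {x : V} (hx : x ∈ w.support) :
    ∃ i ≤ w.length, w.getVert i = x ∧ w.IsSelected i := by
  rcases Nat.even_or_odd (G.dist u x) with hx' | hx'
  · obtain ⟨i, hi, hix, hfirst⟩ := exists_isFirstVisit hx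
    exact ⟨i, hi, hix, .inl ⟨hix ▸ hx', hfirst⟩⟩
  · obtain ⟨i, hi, hix, hlast⟩ := exists_isLastVisit hx
    exact ⟨i, hi, hix, .inr ⟨hix ▸ hx', hlast⟩⟩

theorem IsSelected.eq_of_getVert_eq {w : G.Walk u v} {i j : ℕ} (hi : w.IsSelected i)
    (hj : w.IsSelected j) (hiL : i ≤ w.length) (hjL : j ≤ w.length)
    (h : w.getVert i = w.getVert j) : i = j := by
  have key : ∀ {i j : ℕ}, w.IsSelected i → w.IsSelected j → j ≤ w.length →
      w.getVert i = w.getVert j → ¬ i < j := by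
    rintro i j (⟨hev, -⟩ | ⟨-, hlast⟩) (⟨-, hfirst⟩ | ⟨hodd, -⟩) hjL h hij
    · exact hfirst i hij h
    · exact Nat.not_even_iff_odd.mpr hodd (h ▸ hev)
    · exact hfirst i hij h
    · exact hlast j hij hjL h.symm
  exact le_antisymm (not_lt.1 (key hj hi hiL h.symm)) (not_lt.1 (key hi hj hjL h))

theorem dart_mem_darts_drop (w : G.Walk u v) {i j : ℕ} (hji : j ≤ i) (hi : i < w.length) :
    ⟨(w.getVert i, w.getVert (i + 1)), w.adj_getVert_succ hi⟩ ∈ (w.drop j).darts := by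
  have hlt : i - j < (w.drop j).darts.length := by
    rw [length_darts, drop_length]
    omega
  convert List.getElem_mem hlt using 1
  rw [darts_getElem_eq_getVert]
  ext <;> simp [drop_getVert, Nat.add_sub_cancel' hji, ← Nat.add_assoc]

end Walk

open Walk

variable {u v : V} {w : G.Walk u v}

theorem IsAcyclic.isFirstVisit_succ (hG : G.IsAcyclic) (hd : w.darts.Nodup) {i : ℕ}
    (hi : i < w.length) (hdown : G.dist u (w.getVert (i + 1)) = G.dist u (w.getVert i) + 1) :
    w.IsFirstVisit (i + 1) := by
  intro j hj hjx
  have hbefore := hG.dart_mem_darts_of_dist_eq_add_one (w.take i).reachable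
    (w.adj_getVert_succ hi) hdown ((w.take j).copy rfl hjx)
  rw [darts_copy, darts_take] at hbefore
  have hafter := w.dart_mem_darts_drop (j := j) (by omega) hi
  rw [darts_drop] at hafter
  exact List.disjoint_take_drop hd le_rfl hbefore hafter

theorem IsAcyclic.isLastVisit (hG : G.IsAcyclic) (hd : w.darts.Nodup) {i : ℕ}
    (hi : i < w.length) (hup : G.dist u (w.getVert i) = G.dist u (w.getVert (i + 1)) + 1) :
    w.IsLastVisit i := by
  intro m him hm hmx
  have h := (w.adj_getVert_succ hi).symm
  have hbefore := hG.dart_mem_darts_of_dist_eq_add_one (w.take (i + 1)).reachable h hup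
    (w.take i)
  have hreturn := hG.dart_mem_darts_of_isPath (P := nil) IsPath.nil
    (by simpa using h.ne.symm) h (((w.drop (i + 1)).take (m - (i + 1))).copy rfl
      (by rw [drop_getVert, Nat.add_sub_cancel' him, hmx]))
  rw [darts_copy, darts_take] at hreturn
  rw [darts_take] at hbefore
  exact List.disjoint_take_drop hd (Nat.le_succ i) hbefore
    (by rw [← darts_drop]; exact List.take_subset _ _ hreturn)

theorem IsAcyclic.isSelected_or_isSelected_succ (hG : G.IsAcyclic) (hd : w.darts.Nodup)
    {i : ℕ} (hi : i < w.length) (hodd : Odd (G.dist u (w.getVert i))) :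
    w.IsSelected i ∨ w.IsSelected (i + 1) := by
  rcases hG.dist_eq_dist_add_one_of_adj_of_reachable u (w.adj_getVert_succ hi)
    (w.take i).reachable with hup | hdown
  · exact .inl (.inr ⟨hodd, hG.isLastVisit hd hi hup⟩)
  · exact .inr (.inl ⟨hdown ▸ hodd.add_one, hG.isFirstVisit_succ hd hi hdown⟩)

theorem IsAcyclic.exists_isSelected_between (hG : G.IsAcyclic) (hd : w.darts.Nodup)
    {a b : ℕ} (hb : b ≤ w.length) (hab : a + 3 < b) :
    ∃ c, a < c ∧ c < b ∧ w.IsSelected c := by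
  obtain ⟨i, hai, hia, hodd⟩ : ∃ i, a < i ∧ i ≤ a + 2 ∧ Odd (G.dist u (w.getVert i)) := by
    have hstep := hG.dist_eq_dist_add_one_of_adj_of_reachable u
      (w.adj_getVert_succ (i := a + 1) (by omega)) (w.take _).reachable
    rcases Nat.even_or_odd (G.dist u (w.getVert (a + 1))) with hev | hodd
    · refine ⟨a + 1 + 1, by omega, le_rfl, ?_⟩
      rw [Nat.even_iff] at hev
      rw [Nat.odd_iff]
      omega
    · exact ⟨a + 1, by omega, by omega, hodd⟩
  rcases hG.isSelected_or_isSelected_succ hd (by omega) hodd with h | h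
  · exact ⟨i, hai, by omega, h⟩
  · exact ⟨i + 1, by omega, by omega, h⟩

end SimpleGraph

/-- Let `T` be a tree on `n` vertices and let `Γ` be a DFS contour walk of length
`2n - 3` (a contour with one edge removed: no dart is repeated, and every vertex
appears).  Then one can choose `n` positions along `Γ` projecting bijectively onto the
`n` vertices of `T`, such that consecutive chosen positions are at distance at most `3`
along `Γ`. -/
theorem contour_selection (n : ℕ) (G : SimpleGraph (Fin n))
    (hac : G.IsAcyclic) (u v : Fin n) (w : G.Walk u v)
    (hdarts : w.darts.Nodup)
    (hsupp : ∀ x : Fin n, x ∈ w.support) :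
    ∃ s : Fin n → Fin (w.length + 1),
      StrictMono s ∧
      Function.Bijective (fun k : Fin n => w.getVert (s k : ℕ)) ∧
      ∀ i : ℕ, (h : i + 1 < n) →
        ((s ⟨i + 1, h⟩ : ℕ) - (s ⟨i, by omega⟩ : ℕ)) ≤ 3 := by
  classical
  refine exists_strictMono_bijective_comp_of_gap (Fintype.card_fin n)
    (fun i : Fin (w.length + 1) => w.getVert i) (univ.filter fun i => w.IsSelected i) ?_ ?_ ?_
  · intro i hi j hj h
    simp only [coe_filter, mem_univ, true_and] at hi hj
    exact Fin.ext (hi.eq_of_getVert_eq hj (by omega) (by omega) h)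
  · intro x
    obtain ⟨i, hi, hix, hsel⟩ := SimpleGraph.Walk.exists_isSelected (hsupp x)
    exact ⟨⟨i, by omega⟩, by simpa using hsel, hix⟩
  · intro a _ b _ hab
    obtain ⟨c, hac', hcb, hc⟩ := hac.exists_isSelected_between hdarts (by omega) hab
    exact ⟨⟨c, by omega⟩, by simpa using hc, hac', hcb⟩
end

section
/- Consider the odd-even transposition process on n positions. For agents starting at positions i < j with both i, j odd and j − i ≥ 2, the agents become adjacent at some round t ≤ n − i − 1. -/
/-!
An agent at odd position `i` climbs one step per round until it reaches `n`, since its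
position always has the parity of the coming round. The agent from `j > i` reaches `n` first,
at time `n - j`, idles one round at the top, and then descends one step per round. Writing
`j = i + 2k`, at time `n - i - k` the lower agent is at `n - k` and the upper at `n - k + 1`.
-/

lemma oeStep_of_parity_eq (n r p : ℕ) (hpr : p % 2 = r % 2) (hp : p < n) :
    oeStep n r p = p + 1 := by
  unfold oeStep
  split_ifs <;> omega

lemma oeStep_of_parity_ne (n r p : ℕ) (hpr : p % 2 ≠ r % 2) (hp : 1 < p) :
    oeStep n r p = p - 1 := by
  unfold oeStep
  split_ifs <;> omega

lemma oeStep_top (n r : ℕ) (hnr : n % 2 = r % 2) : oeStep n r n = n := by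
  unfold oeStep
  split_ifs <;> omega

lemma oePos_climb {n i : ℕ} (hi : i % 2 = 1) {t : ℕ} (ht : i + t ≤ n) :
    oePos n i t = i + t := by
  induction t with
  | zero => rfl
  | succ t ih =>
    rw [oePos, ih (by omega), oeStep_of_parity_eq _ _ _ (by omega) (by omega)]
    rfl

lemma oePos_descend {n j : ℕ} (hj : j % 2 = 1) (hjn : j ≤ n) {s : ℕ} (hs : s + 2 ≤ n) :
    oePos n j (n - j + 1 + s) = n - s := by
  induction s with
  | zero =>
    have hclimb : oePos n j (n - j) = n := by rw [oePos_climb hj (by omega)]; omega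
    rw [Nat.add_zero, oePos, hclimb, oeStep_top _ _ (by omega), Nat.sub_zero]
  | succ s ih =>
    rw [← Nat.add_assoc, oePos, ih (by omega), oeStep_of_parity_ne _ _ _ (by omega) (by omega)]
    omega

theorem oe_meet_odd_odd_general (n i j : ℕ) (hiodd : i % 2 = 1)
    (hjodd : j % 2 = 1) (hij : i + 2 ≤ j) (hjn : j ≤ n) :
    ∃ t ≤ n - i - 1, Nat.dist (oePos n i t) (oePos n j t) = 1 := by
  obtain ⟨k, hk, rfl⟩ : ∃ k, 1 ≤ k ∧ j = i + 2 * k := ⟨(j - i) / 2, by omega, by omega⟩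
  refine ⟨n - i - k, by omega, ?_⟩
  have hlower : oePos n i (n - i - k) = n - k := by
    rw [oePos_climb hiodd (by omega)]
    omega
  have hupper : oePos n (i + 2 * k) (n - i - k) = n - (k - 1) := by
    rw [show n - i - k = n - (i + 2 * k) + 1 + (k - 1) by omega]
    exact oePos_descend hjodd hjn (by omega)
  rw [hlower, hupper, Nat.dist]
  omega

/-- Agents starting at positions `i < j` with both `i, j` odd and `j - i ≥ 2` become
adjacent at some round `t ≤ n - i - 1`. -/
theorem oe_meet_odd_odd (n i j : ℕ) (hn : 2 ≤ n) (hi1 : 1 ≤ i) (hiodd : i % 2 = 1)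
    (hjodd : j % 2 = 1) (hij : i + 2 ≤ j) (hjn : j ≤ n) :
    ∃ t ≤ n - i - 1, Nat.dist (oePos n i t) (oePos n j t) = 1 :=
  oe_meet_odd_odd_general n i j hiodd hjodd hij hjn
end
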